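/- Suppose that μ-almost everywhere g22 > (1 + g21·p1)·g12 and g11 > (1 + g12·p2)·g21 (the uniformly weak sufficient conditions (UW_C1) and (UW_C2)). Then for every power-split policy (α1, α2), min over j ∈ {1,...,6} of S_j(α,p) ≤ min over j ∈ {1,...,6} of S_j(1,p) = E[C(g11 p1/(1 + g12 p2))] + E[C(g22 p2/(1 + g21 p1))]; i.e. the Han–Kobayashi sum-rate bound is maximized by sending only private messages and having both receivers treat interference as noise. -/

import Mathlib

/-! Among the six bounds, `S4` alone does the work: `min_j S_j(α,p) ≤ S4(α,p)`, while at `α = 1`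
all six collapse to the sum rate of treating interference as noise. With `x_kj = g_kj p_j`, the
product of the two factors `1 + (argument of C)` in `S4` regroups by transmitter into
`(1 + x12 + α1 x11) / (1 + α1 x21) * (1 + x21 + α2 x22) / (1 + α2 x12)`, and each factor is
nondecreasing in `α_k` precisely when `(1 + x12) x21 ≤ x11`, resp. `(1 + x21) x12 ≤ x22`, which is
the weak-interference condition. So `S4(α) ≤ S4(1)` pointwise, hence in expectation. -/

open MeasureTheory

/-- `C(x) = log₂(1+x)`. -/
noncomputable def C (x : ℝ) : ℝ := Real.logb 2 (1 + x)

variable {Ω : Type*} [MeasurableSpace Ω]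

/-- Han–Kobayashi sum-rate bound `S1(α,p)` (sum of the two individual-rate bounds). -/
noncomputable def S1 (μ : Measure Ω) (g11 g12 g21 g22 p1 p2 a1 a2 : Ω → ℝ) : ℝ :=
  (∫ ω, C (g11 ω * p1 ω / (1 + a2 ω * g12 ω * p2 ω)) ∂μ)
    + ∫ ω, C (g22 ω * p2 ω / (1 + a1 ω * g21 ω * p1 ω)) ∂μ

/-- Han–Kobayashi sum-rate bound `S2(α,p)`. -/
noncomputable def S2 (μ : Measure Ω) (g11 g12 g21 g22 p1 p2 a1 a2 : Ω → ℝ) : ℝ :=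
  (∫ ω, C ((g11 ω * p1 ω + (1 - a2 ω) * g12 ω * p2 ω) / (1 + a2 ω * g12 ω * p2 ω)) ∂μ)
    + ∫ ω, C (a2 ω * g22 ω * p2 ω / (1 + a1 ω * g21 ω * p1 ω)) ∂μ

/-- Han–Kobayashi sum-rate bound `S3(α,p)`: `S2` with the roles of the two users swapped. -/
noncomputable def S3 (μ : Measure Ω) (g11 g12 g21 g22 p1 p2 a1 a2 : Ω → ℝ) : ℝ :=
  S2 μ g22 g21 g12 g11 p2 p1 a2 a1

/-- Han–Kobayashi sum-rate bound `S4(α,p)`. -/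
noncomputable def S4 (μ : Measure Ω) (g11 g12 g21 g22 p1 p2 a1 a2 : Ω → ℝ) : ℝ :=
  (∫ ω, C ((a1 ω * g11 ω * p1 ω + (1 - a2 ω) * g12 ω * p2 ω) / (1 + a2 ω * g12 ω * p2 ω)) ∂μ)
    + ∫ ω, C ((a2 ω * g22 ω * p2 ω + (1 - a1 ω) * g21 ω * p1 ω) / (1 + a1 ω * g21 ω * p1 ω)) ∂μ

/-- Han–Kobayashi sum-rate bound `S5(α,p)` (the `2R1 + R2` bound combined with `R2`). -/
noncomputable def S5 (μ : Measure Ω) (g11 g12 g21 g22 p1 p2 a1 a2 : Ω → ℝ) : ℝ :=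
  ((∫ ω, C ((g11 ω * p1 ω + (1 - a2 ω) * g12 ω * p2 ω) / (1 + a2 ω * g12 ω * p2 ω)) ∂μ)
    + (∫ ω, C (a1 ω * g11 ω * p1 ω / (1 + a2 ω * g12 ω * p2 ω)) ∂μ)
    + (∫ ω, C ((a2 ω * g22 ω * p2 ω + (1 - a1 ω) * g21 ω * p1 ω) / (1 + a1 ω * g21 ω * p1 ω)) ∂μ)
    + ∫ ω, C (g22 ω * p2 ω / (1 + a1 ω * g21 ω * p1 ω)) ∂μ) / 2

/-- Han–Kobayashi sum-rate bound `S6(α,p)`: `S5` with the roles of the two users swapped. -/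
noncomputable def S6 (μ : Measure Ω) (g11 g12 g21 g22 p1 p2 a1 a2 : Ω → ℝ) : ℝ :=
  S5 μ g22 g21 g12 g11 p2 p1 a2 a1

/-- The Han–Kobayashi sum-rate bound: `min` over `j ∈ {1,…,6}` of `S_j(α,p)`. -/
noncomputable def minS (μ : Measure Ω) (g11 g12 g21 g22 p1 p2 a1 a2 : Ω → ℝ) : ℝ :=
  min (S1 μ g11 g12 g21 g22 p1 p2 a1 a2)
    (min (S2 μ g11 g12 g21 g22 p1 p2 a1 a2)
      (min (S3 μ g11 g12 g21 g22 p1 p2 a1 a2)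
        (min (S4 μ g11 g12 g21 g22 p1 p2 a1 a2)
          (min (S5 μ g11 g12 g21 g22 p1 p2 a1 a2) (S6 μ g11 g12 g21 g22 p1 p2 a1 a2)))))

lemma measurable_C : Measurable C :=
  (Real.measurable_log.comp (measurable_const.add measurable_id)).div_const _

lemma C_nonneg {x : ℝ} (hx : 0 ≤ x) : 0 ≤ C x :=
  Real.logb_nonneg one_lt_two (by linarith)

lemma C_le_C {x y : ℝ} (hx : 0 ≤ x) (hxy : x ≤ y) : C x ≤ C y :=
  Real.logb_le_logb_of_le one_lt_two (by linarith) (by linarith)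

lemma C_add_C_le_of_mul_le {u₁ u₂ v₁ v₂ : ℝ} (hu₁ : 0 ≤ u₁) (hu₂ : 0 ≤ u₂)
    (hv₁ : 0 ≤ v₁) (hv₂ : 0 ≤ v₂) (h : (1 + u₁) * (1 + u₂) ≤ (1 + v₁) * (1 + v₂)) :
    C u₁ + C u₂ ≤ C v₁ + C v₂ := by
  simp only [C]
  rw [← Real.logb_mul (by positivity) (by positivity),
    ← Real.logb_mul (by positivity) (by positivity)]
  exact Real.logb_le_logb_of_le one_lt_two (by positivity) h

lemma one_add_add_mul_div_le_of_weak {x y z a : ℝ} (hz : 0 ≤ z)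
    (ha₀ : 0 ≤ a) (ha₁ : a ≤ 1) (hweak : (1 + y) * z ≤ x) :
    (1 + y + a * x) / (1 + a * z) ≤ (1 + y + x) / (1 + z) := by
  rw [div_le_div_iff₀ (by positivity) (by positivity)]
  nlinarith [mul_nonneg (sub_nonneg.2 ha₁) (sub_nonneg.2 hweak)]

lemma split_rate_nonneg {x y b₁ b₂ : ℝ} (hx : 0 ≤ x) (hy : 0 ≤ y)
    (hb₁ : b₁ ∈ Set.Icc (0 : ℝ) 1) (hb₂ : b₂ ∈ Set.Icc (0 : ℝ) 1) :
    0 ≤ (b₁ * x + (1 - b₂) * y) / (1 + b₂ * y) := by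
  have := hb₁.1
  have := hb₂.1
  have := sub_nonneg.2 hb₂.2
  positivity

lemma split_rate_le_add {x y b₁ b₂ : ℝ} (hx : 0 ≤ x) (hy : 0 ≤ y)
    (hb₁ : b₁ ∈ Set.Icc (0 : ℝ) 1) (hb₂ : b₂ ∈ Set.Icc (0 : ℝ) 1) :
    (b₁ * x + (1 - b₂) * y) / (1 + b₂ * y) ≤ x + y := by
  have hden : 1 ≤ 1 + b₂ * y := by nlinarith [hb₂.1]
  calc (b₁ * x + (1 - b₂) * y) / (1 + b₂ * y)
      ≤ b₁ * x + (1 - b₂) * y :=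
        div_le_self (by nlinarith [hb₁.1, hb₂.2]) hden
    _ ≤ x + y := by nlinarith [hb₁.2, hb₂.1]

lemma C_split_add_C_split_le {x₁₁ x₁₂ x₂₁ x₂₂ a₁ a₂ : ℝ}
    (h₁₁ : 0 ≤ x₁₁) (h₁₂ : 0 ≤ x₁₂) (h₂₁ : 0 ≤ x₂₁) (h₂₂ : 0 ≤ x₂₂)
    (ha₁ : a₁ ∈ Set.Icc (0 : ℝ) 1) (ha₂ : a₂ ∈ Set.Icc (0 : ℝ) 1)
    (hw₁ : (1 + x₂₁) * x₁₂ ≤ x₂₂) (hw₂ : (1 + x₁₂) * x₂₁ ≤ x₁₁) :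
    C ((a₁ * x₁₁ + (1 - a₂) * x₁₂) / (1 + a₂ * x₁₂))
      + C ((a₂ * x₂₂ + (1 - a₁) * x₂₁) / (1 + a₁ * x₂₁))
    ≤ C (x₁₁ / (1 + x₁₂)) + C (x₂₂ / (1 + x₂₁)) := by
  refine C_add_C_le_of_mul_le (split_rate_nonneg h₁₁ h₁₂ ha₁ ha₂)
    (split_rate_nonneg h₂₂ h₂₁ ha₂ ha₁) (by positivity) (by positivity) ?_
  obtain ⟨ha₁₀, ha₁₁⟩ := ha₁
  obtain ⟨ha₂₀, ha₂₁⟩ := ha₂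
  have : 0 < 1 + a₁ * x₂₁ := by positivity
  have : 0 < 1 + a₂ * x₁₂ := by positivity
  calc _ = (1 + x₁₂ + a₁ * x₁₁) / (1 + a₁ * x₂₁) * ((1 + x₂₁ + a₂ * x₂₂) / (1 + a₂ * x₁₂)) := by
          field_simp; ring
    _ ≤ (1 + x₁₂ + x₁₁) / (1 + x₂₁) * ((1 + x₂₁ + x₂₂) / (1 + x₁₂)) :=
        mul_le_mul (one_add_add_mul_div_le_of_weak h₂₁ ha₁₀ ha₁₁ hw₂)
          (one_add_add_mul_div_le_of_weak h₁₂ ha₂₀ ha₂₁ hw₁) (by positivity) (by positivity)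
    _ = _ := by field_simp

lemma integrable_C_of_le {μ : Measure Ω} {f M : Ω → ℝ} (hf : Measurable f)
    (hf₀ : ∀ ω, 0 ≤ f ω) (hfM : ∀ ω, f ω ≤ M ω) (hM : Integrable (fun ω => C (M ω)) μ) :
    Integrable (fun ω => C (f ω)) μ := by
  refine hM.mono' (measurable_C.comp hf).aestronglyMeasurable (.of_forall fun ω => ?_)
  rw [Real.norm_eq_abs, abs_of_nonneg (C_nonneg (hf₀ ω))]
  exact C_le_C (hf₀ ω) (hfM ω)

lemma integrable_C_split {μ : Measure Ω} {g h p q b₁ b₂ : Ω → ℝ}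
    (hg : Measurable g) (hh : Measurable h) (hp : Measurable p) (hq : Measurable q)
    (hb₁ : Measurable b₁) (hb₂ : Measurable b₂)
    (hg₀ : ∀ ω, 0 ≤ g ω) (hh₀ : ∀ ω, 0 ≤ h ω) (hp₀ : ∀ ω, 0 ≤ p ω) (hq₀ : ∀ ω, 0 ≤ q ω)
    (hb₁r : ∀ ω, b₁ ω ∈ Set.Icc (0 : ℝ) 1) (hb₂r : ∀ ω, b₂ ω ∈ Set.Icc (0 : ℝ) 1)
    (hI : Integrable (fun ω => C (g ω * p ω + h ω * q ω)) μ) :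
    Integrable (fun ω =>
      C ((b₁ ω * g ω * p ω + (1 - b₂ ω) * h ω * q ω) / (1 + b₂ ω * h ω * q ω))) μ := by
  refine integrable_C_of_le (by fun_prop) (fun ω => ?_) (fun ω => ?_) hI <;> simp only [mul_assoc]
  · exact split_rate_nonneg (mul_nonneg (hg₀ ω) (hp₀ ω)) (mul_nonneg (hh₀ ω) (hq₀ ω))
      (hb₁r ω) (hb₂r ω)
  · exact split_rate_le_add (mul_nonneg (hg₀ ω) (hp₀ ω)) (mul_nonneg (hh₀ ω) (hq₀ ω))
      (hb₁r ω) (hb₂r ω)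

section HanKobayashi

variable {μ : Measure Ω} {g11 g12 g21 g22 p1 p2 : Ω → ℝ}

lemma minS_le_S4 (a1 a2 : Ω → ℝ) :
    minS μ g11 g12 g21 g22 p1 p2 a1 a2 ≤ S4 μ g11 g12 g21 g22 p1 p2 a1 a2 :=
  (min_le_right _ _).trans <| (min_le_right _ _).trans <| (min_le_right _ _).trans <|
    min_le_left _ _

lemma minS_one_one :
    minS μ g11 g12 g21 g22 p1 p2 1 1
      = (∫ ω, C (g11 ω * p1 ω / (1 + g12 ω * p2 ω)) ∂μ)
        + ∫ ω, C (g22 ω * p2 ω / (1 + g21 ω * p1 ω)) ∂μ := by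
  simp only [minS, S1, S2, S3, S4, S5, S6, Pi.one_apply, one_mul, sub_self, zero_mul, add_zero]
  ring_nf
  simp only [min_self]

lemma S4_le_of_weak
    (hg11 : Measurable g11) (hg12 : Measurable g12)
    (hg21 : Measurable g21) (hg22 : Measurable g22)
    (hp1 : Measurable p1) (hp2 : Measurable p2)
    (hg11n : ∀ ω, 0 ≤ g11 ω) (hg12n : ∀ ω, 0 ≤ g12 ω)
    (hg21n : ∀ ω, 0 ≤ g21 ω) (hg22n : ∀ ω, 0 ≤ g22 ω)
    (hp1n : ∀ ω, 0 ≤ p1 ω) (hp2n : ∀ ω, 0 ≤ p2 ω)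
    (hUW1 : ∀ᵐ ω ∂μ, (1 + g21 ω * p1 ω) * g12 ω ≤ g22 ω)
    (hUW2 : ∀ᵐ ω ∂μ, (1 + g12 ω * p2 ω) * g21 ω ≤ g11 ω)
    (hI1 : Integrable (fun ω => C (g11 ω * p1 ω + g12 ω * p2 ω)) μ)
    (hI2 : Integrable (fun ω => C (g22 ω * p2 ω + g21 ω * p1 ω)) μ)
    {a1 a2 : Ω → ℝ} (ha1 : Measurable a1) (ha2 : Measurable a2)
    (ha1r : ∀ ω, a1 ω ∈ Set.Icc (0 : ℝ) 1) (ha2r : ∀ ω, a2 ω ∈ Set.Icc (0 : ℝ) 1) :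
    S4 μ g11 g12 g21 g22 p1 p2 a1 a2 ≤ S4 μ g11 g12 g21 g22 p1 p2 1 1 := by
  have one_mem : ∀ ω, (1 : Ω → ℝ) ω ∈ Set.Icc (0 : ℝ) 1 := fun _ => ⟨zero_le_one, le_rfl⟩
  have hIa1 := integrable_C_split hg11 hg12 hp1 hp2 ha1 ha2 hg11n hg12n hp1n hp2n ha1r ha2r hI1
  have hIa2 := integrable_C_split hg22 hg21 hp2 hp1 ha2 ha1 hg22n hg21n hp2n hp1n ha2r ha1r hI2
  have hI11 := integrable_C_split (b₁ := 1) (b₂ := 1) hg11 hg12 hp1 hp2 measurable_const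
    measurable_const hg11n hg12n hp1n hp2n one_mem one_mem hI1
  have hI12 := integrable_C_split (b₁ := 1) (b₂ := 1) hg22 hg21 hp2 hp1 measurable_const
    measurable_const hg22n hg21n hp2n hp1n one_mem one_mem hI2
  rw [S4, S4, ← integral_add hIa1 hIa2, ← integral_add hI11 hI12]
  refine integral_mono_ae (hIa1.add hIa2) (hI11.add hI12) ?_
  filter_upwards [hUW1, hUW2] with ω hw1 hw2
  simp only [Pi.one_apply, one_mul, sub_self, zero_mul, add_zero, mul_assoc]
  exact C_split_add_C_split_le (mul_nonneg (hg11n ω) (hp1n ω)) (mul_nonneg (hg12n ω) (hp2n ω))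
    (mul_nonneg (hg21n ω) (hp1n ω)) (mul_nonneg (hg22n ω) (hp2n ω)) (ha1r ω) (ha2r ω)
    (by simpa only [mul_assoc] using mul_le_mul_of_nonneg_right hw1 (hp2n ω))
    (by simpa only [mul_assoc] using mul_le_mul_of_nonneg_right hw2 (hp1n ω))

end HanKobayashi

theorem stmt11_general (μ : Measure Ω)
    (g11 g12 g21 g22 p1 p2 : Ω → ℝ)
    (hg11 : Measurable g11) (hg12 : Measurable g12)
    (hg21 : Measurable g21) (hg22 : Measurable g22)
    (hp1 : Measurable p1) (hp2 : Measurable p2)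
    (hg11n : ∀ ω, 0 ≤ g11 ω) (hg12n : ∀ ω, 0 ≤ g12 ω)
    (hg21n : ∀ ω, 0 ≤ g21 ω) (hg22n : ∀ ω, 0 ≤ g22 ω)
    (hp1n : ∀ ω, 0 ≤ p1 ω) (hp2n : ∀ ω, 0 ≤ p2 ω)
    (hUW1 : ∀ᵐ ω ∂μ, (1 + g21 ω * p1 ω) * g12 ω < g22 ω)
    (hUW2 : ∀ᵐ ω ∂μ, (1 + g12 ω * p2 ω) * g21 ω < g11 ω)
    (hI1 : Integrable (fun ω => C (g11 ω * p1 ω + g12 ω * p2 ω)) μ)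
    (hI2 : Integrable (fun ω => C (g21 ω * p1 ω + g22 ω * p2 ω)) μ)
    (a1 a2 : Ω → ℝ) (ha1 : Measurable a1) (ha2 : Measurable a2)
    (ha1r : ∀ ω, a1 ω ∈ Set.Icc (0 : ℝ) 1) (ha2r : ∀ ω, a2 ω ∈ Set.Icc (0 : ℝ) 1) :
    minS μ g11 g12 g21 g22 p1 p2 a1 a2 ≤ minS μ g11 g12 g21 g22 p1 p2 1 1
    ∧ minS μ g11 g12 g21 g22 p1 p2 1 1
        = (∫ ω, C (g11 ω * p1 ω / (1 + g12 ω * p2 ω)) ∂μ)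
          + ∫ ω, C (g22 ω * p2 ω / (1 + g21 ω * p1 ω)) ∂μ := by
  refine ⟨?_, minS_one_one⟩
  have hS4 := S4_le_of_weak hg11 hg12 hg21 hg22 hp1 hp2 hg11n hg12n hg21n hg22n hp1n hp2n
    (hUW1.mono fun _ h => h.le) (hUW2.mono fun _ h => h.le) hI1
    (by simpa only [add_comm] using hI2) ha1 ha2 ha1r ha2r
  calc minS μ g11 g12 g21 g22 p1 p2 a1 a2 ≤ S4 μ g11 g12 g21 g22 p1 p2 a1 a2 := minS_le_S4 a1 a2
    _ ≤ S4 μ g11 g12 g21 g22 p1 p2 1 1 := hS4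
    _ = minS μ g11 g12 g21 g22 p1 p2 1 1 := by
      rw [minS_one_one, S4]
      simp only [Pi.one_apply, one_mul, sub_self, zero_mul, add_zero]

/-- Under the uniformly weak sufficient conditions (UW_C1) and (UW_C2) holding
a.e., for every power-split policy `(α1, α2)`,
`min_{j∈{1,…,6}} S_j(α,p) ≤ min_{j∈{1,…,6}} S_j(1,p)
  = E[C(g11 p1/(1 + g12 p2))] + E[C(g22 p2/(1 + g21 p1))]`:
the Han–Kobayashi sum-rate bound is maximized by sending only private messages and having both
receivers treat interference as noise. -/
theorem stmt11 (μ : Measure Ω) [IsProbabilityMeasure μ]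
    (g11 g12 g21 g22 p1 p2 : Ω → ℝ)
    (hg11 : Measurable g11) (hg12 : Measurable g12)
    (hg21 : Measurable g21) (hg22 : Measurable g22)
    (hp1 : Measurable p1) (hp2 : Measurable p2)
    (hg11n : ∀ ω, 0 ≤ g11 ω) (hg12n : ∀ ω, 0 ≤ g12 ω)
    (hg21n : ∀ ω, 0 ≤ g21 ω) (hg22n : ∀ ω, 0 ≤ g22 ω)
    (hp1n : ∀ ω, 0 ≤ p1 ω) (hp2n : ∀ ω, 0 ≤ p2 ω)
    (hUW1 : ∀ᵐ ω ∂μ, (1 + g21 ω * p1 ω) * g12 ω < g22 ω)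
    (hUW2 : ∀ᵐ ω ∂μ, (1 + g12 ω * p2 ω) * g21 ω < g11 ω)
    (hI1 : Integrable (fun ω => C (g11 ω * p1 ω + g12 ω * p2 ω)) μ)
    (hI2 : Integrable (fun ω => C (g21 ω * p1 ω + g22 ω * p2 ω)) μ)
    (a1 a2 : Ω → ℝ) (ha1 : Measurable a1) (ha2 : Measurable a2)
    (ha1r : ∀ ω, a1 ω ∈ Set.Icc (0 : ℝ) 1) (ha2r : ∀ ω, a2 ω ∈ Set.Icc (0 : ℝ) 1) :
    minS μ g11 g12 g21 g22 p1 p2 a1 a2 ≤ minS μ g11 g12 g21 g22 p1 p2 1 1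
    ∧ minS μ g11 g12 g21 g22 p1 p2 1 1
        = (∫ ω, C (g11 ω * p1 ω / (1 + g12 ω * p2 ω)) ∂μ)
          + ∫ ω, C (g22 ω * p2 ω / (1 + g21 ω * p1 ω)) ∂μ :=
  stmt11_general μ g11 g12 g21 g22 p1 p2 hg11 hg12 hg21 hg22 hp1 hp2 hg11n hg12n hg21n hg22n hp1n
    hp2n hUW1 hUW2 hI1 hI2 a1 a2 ha1 ha2 ha1r ha2r
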